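/- Let A' = (1, a_1, …, a_k) be an orderly currency and let a_{k+1} be an integer with a_{k+1} > a_k. Set m = ⌈a_{k+1}/a_k⌉ and let A = (1, a_1, …, a_k, a_{k+1}). Then A is orderly if and only if opt_A(m·a_k) = grd_A(m·a_k). -/

import Mathlib

/-- The largest coin of the currency with coins `a 0, …, a k` that is `≤ c`
(or `0` if there is none). -/
def bestCoin (a : ℕ → ℕ) (k : ℕ) (c : ℕ) : ℕ :=
  ((Finset.range (k + 1)).filter fun j => a j ≤ c).sup a

/-- The number of coins used by the greedy algorithm to pay the amount `c`,
using the currency with coins `a 0, …, a k`. -/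
def grd (a : ℕ → ℕ) (k : ℕ) : ℕ → ℕ
  | 0 => 0
  | c + 1 =>
    if h : 1 ≤ bestCoin a k (c + 1) then
      grd a k (c + 1 - bestCoin a k (c + 1)) + 1
    else 0
  decreasing_by omega

/-- The minimal number of coins needed to pay the amount `c`,
using the currency with coins `a 0, …, a k`. -/
noncomputable def opt (a : ℕ → ℕ) (k : ℕ) (c : ℕ) : ℕ :=
  sInf {n | ∃ x : Fin (k + 1) → ℕ, (∑ i, x i) = n ∧ (∑ i, x i * a i.1) = c}

/-- `a 0, …, a k` is a currency: it starts with the coin `1` and is strictly increasing. -/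
def IsCurrency (a : ℕ → ℕ) (k : ℕ) : Prop :=
  a 0 = 1 ∧ ∀ i j : ℕ, i < j → j ≤ k → a i < a j

/-- The currency with coins `a 0, …, a k` is orderly: the greedy payment is
optimal for every positive amount. -/
def Orderly (a : ℕ → ℕ) (k : ℕ) : Prop :=
  ∀ c : ℕ, 0 < c → opt a k c = grd a k c

/-- The set `𝒜(a) = ⋃_{m ≥ 1} {m·a − l : 0 ≤ l ≤ m}`. -/
def calA (a : ℕ) : Set ℕ :=
  {x | ∃ m l : ℕ, 1 ≤ m ∧ l ≤ m ∧ x = m * a - l}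

/-!
Greedy never beats an optimal payment, so only `grd ≤ opt` is at stake. Write `A'` for the old
currency and `b` for the new coin. Since `A'` is orderly, `grd_{A'}` is subadditive and
`grd_{A'} (x + t·a_k) = grd_{A'} x + t`. The condition at `m·a_k` says
`grd_{A'} (m·a_k - b) < m`, and then, for `c ≥ b`,
`grd_{A'} (c - b) + m = grd_{A'} (c + (m·a_k - b)) ≤ grd_{A'} c + m - 1`:
paying `b` first never costs the greedy algorithm a coin, so `grd_A ≤ grd_{A'}`. An optimal
`A`-payment of `c` either avoids `b`, and then `opt_A c = opt_{A'} c = grd_{A'} c ≥ grd_A c`, or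
contains `b`, and then induction on `c - b` applies.
-/

open Finset

namespace IsCurrency

variable {a : ℕ → ℕ} {k : ℕ}

lemma apply_le_apply (h : IsCurrency a k) {i j : ℕ} (hij : i ≤ j) (hj : j ≤ k) :
    a i ≤ a j := by
  rcases hij.eq_or_lt with rfl | hlt
  · exact le_rfl
  · exact (h.2 i j hlt hj).le

lemma one_le (h : IsCurrency a k) {j : ℕ} (hj : j ≤ k) : 1 ≤ a j :=
  h.1 ▸ h.apply_le_apply (Nat.zero_le j) hj

lemma extend (h : IsCurrency a k) {b : ℕ} (hb : a k < b) :
    IsCurrency (fun i => if i ≤ k then a i else b) (k + 1) := by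
  refine ⟨by simp [h.1], fun i j hij hj => ?_⟩
  rcases hj.lt_or_eq with hj | rfl
  · simpa [show i ≤ k by omega, show j ≤ k by omega] using h.2 i j hij (by omega)
  · simpa [show i ≤ k by omega] using (h.apply_le_apply (by omega) le_rfl).trans_lt hb

lemma of_succ (h : IsCurrency a (k + 1)) : IsCurrency a k :=
  ⟨h.1, fun i j hij hj => h.2 i j hij (by omega)⟩

end IsCurrency

section Congr

variable {a a' : ℕ → ℕ} {k : ℕ}

lemma bestCoin_congr (h : ∀ i ≤ k, a i = a' i) : bestCoin a k = bestCoin a' k := by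
  funext c
  have hmem {j : ℕ} (hj : j ∈ range (k + 1)) : j ≤ k := Nat.lt_succ_iff.mp (mem_range.mp hj)
  refine sup_congr (filter_congr fun j hj => by rw [h j (hmem hj)]) fun j hj => ?_
  exact h j (hmem (mem_filter.mp hj).1)

lemma grd_congr (h : ∀ i ≤ k, a i = a' i) : grd a k = grd a' k := by
  funext c
  induction c using Nat.strong_induction_on with
  | _ c ih =>
    cases c with
    | zero => simp only [grd.eq_1]
    | succ c =>
      rw [grd.eq_2, grd.eq_2, bestCoin_congr h]
      split_ifs
      · rw [ih _ (by omega)]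
      · rfl

lemma opt_congr (h : ∀ i ≤ k, a i = a' i) : opt a k = opt a' k := by
  funext c
  have hcoin (x : Fin (k + 1) → ℕ) : ∑ i, x i * a i = ∑ i, x i * a' i :=
    sum_congr rfl fun i _ => by rw [h i (Nat.lt_succ_iff.mp i.2)]
  simp only [opt, hcoin]

lemma Orderly.congr (h : ∀ i ≤ k, a i = a' i) (ho : Orderly a k) : Orderly a' k := by
  rwa [Orderly, ← opt_congr h, ← grd_congr h]

end Congr

section Greedy

variable (a : ℕ → ℕ) (k : ℕ)

lemma bestCoin_le (c : ℕ) : bestCoin a k c ≤ c :=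
  Finset.sup_le fun _ hj => (mem_filter.mp hj).2

lemma exists_coin_eq_bestCoin (h0 : a 0 = 1) {c : ℕ} (hc : 0 < c) :
    ∃ j ≤ k, a j = bestCoin a k c := by
  have hne : ((range (k + 1)).filter fun j => a j ≤ c).Nonempty :=
    ⟨0, mem_filter.2 ⟨by simp, h0 ▸ hc⟩⟩
  obtain ⟨j, hj, hsup⟩ := exists_mem_eq_sup _ hne a
  exact ⟨j, Nat.lt_succ_iff.mp (mem_range.mp (mem_filter.mp hj).1), hsup.symm⟩

lemma one_le_bestCoin (h0 : a 0 = 1) {c : ℕ} (hc : 0 < c) : 1 ≤ bestCoin a k c :=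
  h0 ▸ le_sup (f := a) (mem_filter.2 ⟨by simp, h0 ▸ hc⟩)

lemma grd_of_pos (h0 : a 0 = 1) {c : ℕ} (hc : 0 < c) :
    grd a k c = grd a k (c - bestCoin a k c) + 1 := by
  obtain ⟨c, rfl⟩ := Nat.exists_eq_add_one_of_ne_zero hc.ne'
  rw [grd.eq_2, dif_pos (one_le_bestCoin a k h0 hc)]

lemma bestCoin_eq_top (hcur : IsCurrency a k) {c : ℕ} (hc : a k ≤ c) : bestCoin a k c = a k :=
  le_antisymm
    (Finset.sup_le fun j hj => hcur.apply_le_apply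
      (Nat.lt_succ_iff.mp (mem_range.mp (mem_filter.mp hj).1)) le_rfl)
    (le_sup (by simpa using hc))

lemma grd_of_top_le (hcur : IsCurrency a k) {c : ℕ} (hc : a k ≤ c) :
    grd a k c = grd a k (c - a k) + 1 := by
  rw [grd_of_pos a k hcur.1 (by have := hcur.one_le le_rfl; omega), bestCoin_eq_top a k hcur hc]

lemma grd_add_mul_top (hcur : IsCurrency a k) (c t : ℕ) :
    grd a k (c + t * a k) = grd a k c + t := by
  induction t with
  | zero => simp
  | succ t ih =>
    rw [grd_of_top_le a k hcur (by nlinarith), add_one_mul, ← add_assoc, Nat.add_sub_cancel, ih,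
      add_assoc]

lemma bestCoin_succ_of_lt {c : ℕ} (hc : c < a (k + 1)) :
    bestCoin a (k + 1) c = bestCoin a k c := by
  rw [bestCoin, range_add_one, filter_insert, if_neg (by omega), bestCoin]

lemma grd_succ_of_lt (h0 : a 0 = 1) {c : ℕ} (hc : c < a (k + 1)) :
    grd a (k + 1) c = grd a k c := by
  induction c using Nat.strong_induction_on with
  | _ c ih =>
    rcases Nat.eq_zero_or_pos c with rfl | hpos
    · simp only [grd.eq_1]
    rw [grd_of_pos a _ h0 hpos, grd_of_pos a _ h0 hpos, bestCoin_succ_of_lt a k hc,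
      ih _ (by have := one_le_bestCoin a k h0 hpos; omega) (by omega)]

end Greedy

section Optimal

variable (a : ℕ → ℕ) (k : ℕ)

lemma opt_le {c : ℕ} (x : Fin (k + 1) → ℕ) (hx : ∑ i, x i * a i = c) :
    opt a k c ≤ ∑ i, x i :=
  Nat.sInf_le ⟨x, rfl, hx⟩

lemma exists_sum_eq_opt (h0 : a 0 = 1) (c : ℕ) :
    ∃ x : Fin (k + 1) → ℕ, ∑ i, x i = opt a k c ∧ ∑ i, x i * a i = c := by
  have hne : {n | ∃ x : Fin (k + 1) → ℕ, ∑ i, x i = n ∧ ∑ i, x i * a i = c}.Nonempty :=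
    ⟨c, Pi.single 0 c, by simp, by simp [Pi.single_apply, ite_mul, h0]⟩
  exact Nat.sInf_mem hne

lemma opt_zero : opt a k 0 = 0 :=
  Nat.le_zero.mp (by simpa using opt_le a k (fun _ => 0) (by simp))

lemma opt_add_le (h0 : a 0 = 1) (c d : ℕ) : opt a k (c + d) ≤ opt a k c + opt a k d := by
  obtain ⟨x, hx, hxc⟩ := exists_sum_eq_opt a k h0 c
  obtain ⟨y, hy, hyd⟩ := exists_sum_eq_opt a k h0 d
  calc opt a k (c + d) ≤ ∑ i, (x i + y i) :=
        opt_le a k _ (by simp only [add_mul, sum_add_distrib, hxc, hyd])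
    _ = opt a k c + opt a k d := by rw [sum_add_distrib, hx, hy]

lemma opt_mul_coin_le {j : ℕ} (hj : j ≤ k) (t : ℕ) : opt a k (t * a j) ≤ t := by
  simpa using opt_le a k (Pi.single ⟨j, by omega⟩ t) (by simp [Pi.single_apply, ite_mul])

lemma opt_le_grd (h0 : a 0 = 1) (c : ℕ) : opt a k c ≤ grd a k c := by
  induction c using Nat.strong_induction_on with
  | _ c ih =>
    rcases Nat.eq_zero_or_pos c with rfl | hpos
    · exact (opt_zero a k).trans_le (Nat.zero_le _)
    obtain ⟨j, hj, hcoin⟩ := exists_coin_eq_bestCoin a k h0 hpos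
    have hle := bestCoin_le a k c
    have hone := one_le_bestCoin a k h0 hpos
    calc opt a k c = opt a k (c - bestCoin a k c + bestCoin a k c) := by rw [Nat.sub_add_cancel hle]
      _ ≤ opt a k (c - bestCoin a k c) + opt a k (1 * a j) := by
          rw [one_mul, hcoin]; exact opt_add_le a k h0 _ _
      _ ≤ grd a k (c - bestCoin a k c) + 1 :=
          add_le_add (ih _ (by omega)) (opt_mul_coin_le a k hj 1)
      _ = grd a k c := (grd_of_pos a k h0 hpos).symm

lemma opt_succ_le (y : Fin (k + 1) → ℕ) (t : ℕ) :
    opt a (k + 1) (∑ i, y i * a i + t * a (k + 1)) ≤ ∑ i, y i + t := by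
  have hval : ∑ i, (Fin.snoc y t : Fin (k + 2) → ℕ) i * a i =
      ∑ i, y i * a i + t * a (k + 1) := by
    simp [Fin.sum_univ_castSucc]
  simpa [Fin.sum_univ_castSucc] using opt_le a (k + 1) _ hval

lemma opt_le_opt_succ_or (h0 : a 0 = 1) (c : ℕ) :
    opt a k c ≤ opt a (k + 1) c ∨
      a (k + 1) ≤ c ∧ opt a (k + 1) (c - a (k + 1)) + 1 ≤ opt a (k + 1) c := by
  obtain ⟨x, hx, hxc⟩ := exists_sum_eq_opt a (k + 1) h0 c
  rw [Fin.sum_univ_castSucc] at hx hxc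
  simp only [Fin.val_last, Fin.val_castSucc] at hxc
  rcases Nat.eq_zero_or_pos (x (Fin.last (k + 1))) with hlast | hlast
  · left
    rw [← hx, hlast, add_zero]
    exact opt_le a k _ (by simpa [hlast] using hxc)
  · right
    obtain ⟨t, ht⟩ := Nat.exists_eq_add_one_of_ne_zero hlast.ne'
    rw [ht] at hx hxc
    refine ⟨by rw [← hxc, add_one_mul]; omega, ?_⟩
    have hrest : c - a (k + 1) = ∑ i : Fin (k + 1), x i.castSucc * a i + t * a (k + 1) := by
      rw [← hxc, add_one_mul]; omega
    have := opt_succ_le a k (fun i => x i.castSucc) t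
    rw [← hrest] at this
    omega

end Optimal

lemma Orderly.opt_eq_grd {a : ℕ → ℕ} {k : ℕ} (ho : Orderly a k) (c : ℕ) :
    opt a k c = grd a k c := by
  rcases Nat.eq_zero_or_pos c with rfl | hc
  · rw [opt_zero, grd.eq_1]
  · exact ho c hc

lemma Orderly.grd_add_le {a : ℕ → ℕ} {k : ℕ} (h0 : a 0 = 1) (ho : Orderly a k) (c d : ℕ) :
    grd a k (c + d) ≤ grd a k c + grd a k d := by
  simpa only [ho.opt_eq_grd] using opt_add_le a k h0 c d

lemma grd_sub_add_one_le {a : ℕ → ℕ} {k : ℕ} (hcur : IsCurrency a k) (hord : Orderly a k)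
    {b m c : ℕ} (hbm : b ≤ m * a k) (hgrd : grd a k (m * a k - b) + 1 ≤ m) (hbc : b ≤ c) :
    grd a k (c - b) + 1 ≤ grd a k c := by
  have hshift : c - b + m * a k = c + (m * a k - b) := by omega
  have := hord.grd_add_le hcur.1 c (m * a k - b)
  rw [← hshift, grd_add_mul_top a k hcur] at this
  omega

section OnePoint

variable {a : ℕ → ℕ} {k : ℕ} (hcur : IsCurrency a (k + 1)) (hord : Orderly a k) {m : ℕ}
  (hm : a (k + 1) ≤ m * a k) (hgrd : grd a k (m * a k - a (k + 1)) + 1 ≤ m)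
include hcur hord hm hgrd

lemma grd_succ_le_grd (c : ℕ) : grd a (k + 1) c ≤ grd a k c := by
  induction c using Nat.strong_induction_on with
  | _ c ih =>
    rcases lt_or_ge c (a (k + 1)) with hc | hc
    · exact (grd_succ_of_lt a k hcur.1 hc).le
    have hb := hcur.one_le le_rfl
    calc grd a (k + 1) c = grd a (k + 1) (c - a (k + 1)) + 1 := grd_of_top_le a _ hcur hc
      _ ≤ grd a k (c - a (k + 1)) + 1 := by gcongr; exact ih _ (by omega)
      _ ≤ grd a k c := grd_sub_add_one_le hcur.of_succ hord hm hgrd hc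

lemma grd_succ_le_opt_succ (c : ℕ) : grd a (k + 1) c ≤ opt a (k + 1) c := by
  induction c using Nat.strong_induction_on with
  | _ c ih =>
    rcases opt_le_opt_succ_or a k hcur.1 c with hopt | ⟨hc, hopt⟩
    · calc grd a (k + 1) c ≤ grd a k c := grd_succ_le_grd hcur hord hm hgrd c
        _ = opt a k c := (hord.opt_eq_grd c).symm
        _ ≤ opt a (k + 1) c := hopt
    · have hb := hcur.one_le le_rfl
      calc grd a (k + 1) c = grd a (k + 1) (c - a (k + 1)) + 1 := grd_of_top_le a _ hcur hc
        _ ≤ opt a (k + 1) (c - a (k + 1)) + 1 := by gcongr; exact ih _ (by omega)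
        _ ≤ opt a (k + 1) c := hopt

lemma orderly_succ_of_grd_le : Orderly a (k + 1) := fun c _ =>
  le_antisymm (opt_le_grd a _ hcur.1 c) (grd_succ_le_opt_succ hcur hord hm hgrd c)

end OnePoint

theorem orderly_succ_iff {a : ℕ → ℕ} {k : ℕ} (hcur : IsCurrency a (k + 1))
    (hord : Orderly a k) :
    Orderly a (k + 1) ↔
      opt a (k + 1) ((a (k + 1) + a k - 1) / a k * a k) =
        grd a (k + 1) ((a (k + 1) + a k - 1) / a k * a k) := by
  set m := (a (k + 1) + a k - 1) / a k
  have hk := hcur.one_le (Nat.le_succ k)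
  have hlt : a k < a (k + 1) := hcur.2 k (k + 1) k.lt_succ_self le_rfl
  have hm : a (k + 1) ≤ m * a k := by
    have : a (k + 1) + a k - 1 < m * a k + a k := Nat.lt_div_mul_add hk
    omega
  have hm' : m * a k < a (k + 1) + a k := by
    have : m * a k ≤ a (k + 1) + a k - 1 := Nat.div_mul_le_self _ _
    omega
  refine ⟨fun ho => ho _ (by omega), fun hpt => orderly_succ_of_grd_le hcur hord hm ?_⟩
  calc grd a k (m * a k - a (k + 1)) + 1
      = grd a (k + 1) (m * a k) := by
        rw [grd_of_top_le a _ hcur hm, grd_succ_of_lt a k hcur.1 (by omega)]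
    _ = opt a (k + 1) (m * a k) := hpt.symm
    _ ≤ m := opt_mul_coin_le a _ (Nat.le_succ k) m

/-- **One-point theorem.** If `A' = (1, a 1, …, a k)` is an orderly currency and
`b = a_{k+1} > a k`, then with `m = ⌈b / a k⌉` the extended currency
`A = (1, a 1, …, a k, b)` is orderly iff `opt_A (m * a k) = grd_A (m * a k)`. -/
theorem one_point_theorem (a : ℕ → ℕ) (k : ℕ)
    (hcur : IsCurrency a k) (hord : Orderly a k)
    (b : ℕ) (hb : a k < b)
    (m : ℕ) (hm : m = (b + a k - 1) / a k) :
    Orderly (fun i => if i ≤ k then a i else b) (k + 1) ↔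
      opt (fun i => if i ≤ k then a i else b) (k + 1) (m * a k) =
        grd (fun i => if i ≤ k then a i else b) (k + 1) (m * a k) := by
  have hagree : ∀ i ≤ k, a i = if i ≤ k then a i else b := fun i hi => (if_pos hi).symm
  simpa [hm] using orderly_succ_iff (hcur.extend hb) (hord.congr hagree)
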